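/- arXiv:2102.00314 — 2 statements merged into one kernel-verified Lean document; each statement's English description precedes it below -/
import Mathlib

section
/- If f : {0,1}^d → {0,1} is computed exactly by a threshold circuit of size s, or by a ReLU network of size s, then for every bipartition of the d input bits between Alice and Bob there is a real communication protocol of cost at most s + 1 computing f. Consequently, any threshold circuit or ReLU network computing a function of real communication complexity Ω(d) has size Ω(d). -/
noncomputable section

/-- The ReLU activation. -/
def relu (t : ℝ) : ℝ := max 0 t

/-- A feedforward neural network from `ℝ^n` to `ℝ^q`, given as a sequence of affine
layers; the activation is applied coordinatewise after every affine layer except the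
last one. -/
inductive Net : ℕ → ℕ → Type where
  | last {n q : ℕ} (A : Fin q → Fin n → ℝ) (b : Fin q → ℝ) : Net n q
  | layer {n m q : ℕ} (A : Fin m → Fin n → ℝ) (b : Fin m → ℝ) (rest : Net m q) : Net n q

/-- Evaluation of a network with activation `σ`. -/
def Net.eval (σ : ℝ → ℝ) : {n q : ℕ} → Net n q → (Fin n → ℝ) → Fin q → ℝ
  | _, _, .last A b, x, i => (∑ j, A i j * x j) + b i
  | _, _, .layer A b rest, x, i => rest.eval σ (fun m => σ ((∑ j, A m j * x j) + b m)) i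

/-- The size of a network: the total number of neurons. -/
def Net.size : {n q : ℕ} → Net n q → ℕ
  | _, q, .last _ _ => q
  | _, _, .layer (m := m) _ _ rest => m + rest.size

/-- `sign(t) = 1` if `t > 0` and `0` otherwise. -/
def isgn (z : ℤ) : ℤ := if 0 < z then 1 else 0

/-- A (layered) threshold circuit from `{0,1}^n` to `{0,1}^q`: every gate, including
the output gates, computes a linear threshold function with integer weights. -/
inductive ThrCirc : ℕ → ℕ → Type where
  | last {n q : ℕ} (A : Fin q → Fin n → ℤ) (b : Fin q → ℤ) : ThrCirc n q
  | layer {n m q : ℕ} (A : Fin m → Fin n → ℤ) (b : Fin m → ℤ) (rest : ThrCirc m q) : ThrCirc n q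

/-- Evaluation of a threshold circuit. -/
def ThrCirc.eval : {n q : ℕ} → ThrCirc n q → (Fin n → ℤ) → Fin q → ℤ
  | _, _, .last A b, x, i => isgn ((∑ j, A i j * x j) + b i)
  | _, _, .layer A b rest, x, i => rest.eval (fun m => isgn ((∑ j, A m j * x j) + b m)) i

/-- Size of a threshold circuit: its number of gates. -/
def ThrCirc.size : {n q : ℕ} → ThrCirc n q → ℕ
  | _, q, .last _ _ => q
  | _, _, .layer (m := m) _ _ rest => m + rest.size

/-- Combine Alice's bits (coordinates in `I`) and Bob's bits (coordinates not in `I`)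
into a full input. -/
def mergeInput {d : ℕ} (I : Finset (Fin d))
    (a : {i // i ∈ I} → Bool) (b : {i // i ∉ I} → Bool) : Fin d → Bool :=
  fun i => if h : i ∈ I then a ⟨i, h⟩ else b ⟨i, h⟩

/-- The transcript after `t` rounds of a real communication protocol: in each round
Alice announces a real number `α` (a function of her input and the current transcript),
Bob announces a real number `β`, and the referee appends `1` to the transcript if
`α > β` and `0` otherwise. -/
def realTrans {A B : Type} (α : A → List Bool → ℝ) (β : B → List Bool → ℝ)
    (a : A) (b : B) : ℕ → List Bool
  | 0 => []
  | t + 1 =>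
      realTrans α β a b t ++
        [decide (β b (realTrans α β a b t) < α a (realTrans α β a b t))]

/-! Split the network input as `xa + xb`, where `xa` carries Alice's bits (Bob's set to `0`)
and `xb` Bob's. A gate `z = ⟨a, xa + xb⟩ + b` fires iff `-⟨a, xb⟩ < ⟨a, xa⟩ + b`, a comparison
of a number Alice knows with one Bob knows, so one round per gate reveals the firing pattern
of a layer. ReLU and threshold activations vanish where `z ≤ 0` and are affine in `z` where
`z > 0`, so once the pattern is known the layer's output is again a sum of a vector Alice knows
and one Bob knows, and the simulation goes on. The last round compares the output neuron with
`1/2` (ReLU, the output lies in `{0, 1}`) or with `0` (threshold), so `s` rounds suffice. -/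

section RealTranscript

variable {A B : Type} (α : A → List Bool → ℝ) (β : B → List Bool → ℝ) (a : A) (b : B)

theorem realTrans_length : ∀ t, (realTrans α β a b t).length = t
  | 0 => rfl
  | t + 1 => by simp [realTrans, realTrans_length t]

theorem realTrans_comp {A' B' : Type} (g : A' → A) (h : B' → B) (a' : A') (b' : B') (t : ℕ) :
    realTrans (fun a w => α (g a) w) (fun b w => β (h b) w) a' b' t
      = realTrans α β (g a') (h b') t := by
  induction t with
  | zero => rfl
  | succ t ih => rw [realTrans, realTrans, ih]

theorem realTrans_eq_ofFn {m : ℕ} (g : Fin m → Bool)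
    (hg : ∀ w (k : Fin m), w.length = (k : ℕ) → decide (β b w < α a w) = g k) :
    realTrans α β a b m = List.ofFn g := by
  suffices ∀ t ≤ m, realTrans α β a b t = (List.ofFn g).take t by
    simpa [List.take_of_length_le] using this m le_rfl
  intro t ht
  induction t with
  | zero => rfl
  | succ t ih =>
    have hk := hg (realTrans α β a b t) ⟨t, by omega⟩ (realTrans_length α β a b t)
    rw [realTrans, hk, ih (by omega), List.take_add_one]
    simp [show t < m by omega]

theorem realTrans_add {A' B' : Type} {α' : A' → List Bool → ℝ} {β' : B' → List Bool → ℝ}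
    {a' : A'} {b' : B'} {m : ℕ} {w₀ : List Bool} (h₀ : realTrans α β a b m = w₀)
    (hα : ∀ w, α a (w₀ ++ w) = α' a' w) (hβ : ∀ w, β b (w₀ ++ w) = β' b' w) (t : ℕ) :
    realTrans α β a b (m + t) = w₀ ++ realTrans α' β' a' b' t := by
  induction t with
  | zero => simp [h₀, realTrans]
  | succ t ih => rw [← add_assoc, realTrans, ih, hα, hβ, realTrans, List.append_assoc]

end RealTranscript

theorem neg_dotProduct_lt_iff {n : ℕ} (a x y : Fin n → ℝ) (b : ℝ) :
    -(a ⬝ᵥ y) < a ⬝ᵥ x + b ↔ 0 < a ⬝ᵥ (x + y) + b := by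
  rw [dotProduct_add]
  constructor <;> intro <;> linarith

theorem List.getD_ofFn_append {m : ℕ} (g : Fin m → Bool) (w : List Bool) (k : Fin m) :
    (List.ofFn g ++ w).getD k false = g k := by
  simp [List.getD_eq_getElem?_getD, List.getElem?_append_left]

namespace Net

theorem eval_last (σ : ℝ → ℝ) {n q : ℕ} (A : Fin q → Fin n → ℝ) (b : Fin q → ℝ)
    (x : Fin n → ℝ) (i : Fin q) : (last A b).eval σ x i = A i ⬝ᵥ x + b i := rfl

theorem eval_layer (σ : ℝ → ℝ) {n m q : ℕ} (A : Fin m → Fin n → ℝ) (b : Fin m → ℝ)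
    (rest : Net m q) (x : Fin n → ℝ) :
    (layer A b rest).eval σ x = rest.eval σ (fun k => σ (A k ⬝ᵥ x + b k)) := rfl

/-- Alice's side, holding `xa`, of the simulation of `N` at `xa + xb`. While the transcript is
shorter than the first layer, its length is the index of the gate under test; afterwards its
first-layer part is the firing pattern, and she continues on the rest of `N` with her share of
that layer's output. -/
def aliceMsg (c e θ : ℝ) : {n : ℕ} → Net n 1 → (Fin n → ℝ) → List Bool → ℝ
  | _, .last A b, x, _ => A 0 ⬝ᵥ x + (b 0 - θ)
  | _, .layer (m := m) A b rest, x, w =>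
      if h : w.length < m then A ⟨w.length, h⟩ ⬝ᵥ x + b ⟨w.length, h⟩
      else aliceMsg c e θ rest
        (fun k => if w.getD k false then c * (A k ⬝ᵥ x + b k) + e else 0) (w.drop m)

def bobMsg (c : ℝ) : {n : ℕ} → Net n 1 → (Fin n → ℝ) → List Bool → ℝ
  | _, .last A _, x, _ => -(A 0 ⬝ᵥ x)
  | _, .layer (m := m) A _ rest, x, w =>
      if h : w.length < m then -(A ⟨w.length, h⟩ ⬝ᵥ x)
      else bobMsg c rest (fun k => if w.getD k false then c * (A k ⬝ᵥ x) else 0) (w.drop m)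

variable {σ : ℝ → ℝ} {c e : ℝ} (hσ : ∀ z, σ z = if 0 < z then c * z + e else 0)
include hσ

theorem getLast?_realTrans_aliceMsg_bobMsg (θ : ℝ) :
    ∀ {n : ℕ} (N : Net n 1) (xa xb : Fin n → ℝ),
      (realTrans (aliceMsg c e θ N) (bobMsg c N) xa xb N.size).getLast?
        = some (decide (θ < N.eval σ (xa + xb) 0))
  | _, .last A b, xa, xb => by
      simp only [size, realTrans, List.nil_append, List.getLast?_singleton, aliceMsg, bobMsg,
        Option.some.injEq]
      rw [decide_eq_decide, eval_last, neg_dotProduct_lt_iff, ← add_sub_assoc, sub_pos]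
  | _, .layer (m := m) A b rest, xa, xb => by
      set fires : Fin m → Bool := fun k => decide (0 < A k ⬝ᵥ (xa + xb) + b k)
      set xa' : Fin m → ℝ := fun k => if fires k then c * (A k ⬝ᵥ xa + b k) + e else 0
      set xb' : Fin m → ℝ := fun k => if fires k then c * (A k ⬝ᵥ xb) else 0
      have h₀ : realTrans (aliceMsg c e θ (layer A b rest)) (bobMsg c (layer A b rest)) xa xb m
          = List.ofFn fires := by
        refine realTrans_eq_ofFn _ _ _ _ fires fun w k hw => ?_
        simp only [aliceMsg, bobMsg, hw, k.2, dif_pos, fires, decide_eq_decide]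
        exact neg_dotProduct_lt_iff _ _ _ _
      have hdrop (w : List Bool) : (List.ofFn fires ++ w).drop m = w :=
        List.drop_left' List.length_ofFn
      have hlen (w : List Bool) : ¬ (List.ofFn fires ++ w).length < m := by simp
      have hα (w : List Bool) :
          aliceMsg c e θ (layer A b rest) xa (List.ofFn fires ++ w) = aliceMsg c e θ rest xa' w := by
        simp only [aliceMsg, hlen, dif_neg, not_false_eq_true, hdrop, List.getD_ofFn_append, xa']
      have hβ (w : List Bool) :
          bobMsg c (layer A b rest) xb (List.ofFn fires ++ w) = bobMsg c rest xb' w := by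
        simp only [bobMsg, hlen, dif_neg, not_false_eq_true, hdrop, List.getD_ofFn_append, xb']
      have hshares : xa' + xb' = fun k => σ (A k ⬝ᵥ (xa + xb) + b k) := by
        funext k
        simp only [Pi.add_apply, xa', xb', fires, hσ, decide_eq_true_eq]
        split_ifs
        · rw [dotProduct_add]; ring
        · exact add_zero 0
      rw [size, realTrans_add _ _ _ _ h₀ hα hβ, List.getLast?_append,
        getLast?_realTrans_aliceMsg_bobMsg θ rest, hshares, eval_layer]
      rfl

end Net

def heaviside (t : ℝ) : ℝ := if 0 < t then 1 else 0

theorem heaviside_eq_ite (z : ℝ) : heaviside z = if 0 < z then 0 * z + 1 else 0 := by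
  simp [heaviside]

theorem relu_eq_ite (z : ℝ) : relu z = if 0 < z then 1 * z + 0 else 0 := by
  rw [relu, one_mul, add_zero, max_def]
  split_ifs <;> linarith

theorem Int.cast_isgn (z : ℤ) : (isgn z : ℝ) = heaviside z := by
  simp [isgn, heaviside]

theorem Int.cast_sum_mul_add {n : ℕ} (a x : Fin n → ℤ) (b : ℤ) :
    (((∑ j, a j * x j) + b : ℤ) : ℝ) = (fun j => (a j : ℝ)) ⬝ᵥ (fun j => (x j : ℝ)) + b := by
  push_cast [dotProduct]; rfl

namespace ThrCirc

def toNet : {n q : ℕ} → ThrCirc n q → Net n q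
  | _, _, .last A b => .last (fun i j => A i j) (fun i => b i)
  | _, _, .layer A b rest => .layer (fun i j => A i j) (fun i => b i) rest.toNet

theorem size_toNet : ∀ {n q : ℕ} (T : ThrCirc n q), T.toNet.size = T.size
  | _, _, .last _ _ => rfl
  | _, _, .layer (m := m) _ _ rest => congrArg (m + ·) rest.size_toNet

theorem eval_pos_iff : ∀ {n q : ℕ} (T : ThrCirc n q) (x : Fin n → ℤ) (i : Fin q),
    0 < T.eval x i ↔ 0 < T.toNet.eval heaviside (fun j => (x j : ℝ)) i
  | _, _, .last A b, x, i => by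
      rw [eval, toNet, Net.eval_last, ← Int.cast_sum_mul_add, isgn, Int.cast_pos]
      split_ifs with h <;> simp [h]
  | _, _, .layer A b rest, x, i => by
      rw [eval, toNet, Net.eval_layer, eval_pos_iff rest]
      simp only [← Int.cast_sum_mul_add, ← Int.cast_isgn]

end ThrCirc

theorem indicator_mergeInput_add {d : ℕ} (I : Finset (Fin d)) (a : {i // i ∈ I} → Bool)
    (b : {i // i ∉ I} → Bool) :
    (fun j => if mergeInput I a (fun _ => false) j then (1 : ℝ) else 0)
      + (fun j => if mergeInput I (fun _ => false) b j then 1 else 0)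
      = fun j => if mergeInput I a b j then 1 else 0 := by
  funext j
  by_cases h : j ∈ I <;> simp [mergeInput, h]

theorem Net.exists_realTrans_eq {d : ℕ} {σ : ℝ → ℝ} {c e : ℝ}
    (hσ : ∀ z, σ z = if 0 < z then c * z + e else 0) (θ : ℝ) (N : Net d 1)
    (f : (Fin d → Bool) → Bool)
    (hN : ∀ x : Fin d → Bool, decide (θ < N.eval σ (fun j => if x j then 1 else 0) 0) = f x)
    (I : Finset (Fin d)) :
    ∃ (α : ({i // i ∈ I} → Bool) → List Bool → ℝ) (β : ({i // i ∉ I} → Bool) → List Bool → ℝ)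
      (out : List Bool → Bool), ∀ aIn bIn,
        out (realTrans α β aIn bIn N.size) = f (mergeInput I aIn bIn) := by
  refine ⟨fun aIn => N.aliceMsg c e θ fun j => if mergeInput I aIn (fun _ => false) j then 1 else 0,
    fun bIn => N.bobMsg c fun j => if mergeInput I (fun _ => false) bIn j then 1 else 0,
    fun w => w.getLastD false, fun aIn bIn => ?_⟩
  dsimp only
  rw [realTrans_comp, List.getLastD_eq_getLast?, N.getLast?_realTrans_aliceMsg_bobMsg hσ,
    indicator_mergeInput_add, hN]
  rfl

theorem circuit_to_real_communication_general (d s : ℕ) (f : (Fin d → Bool) → Bool)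
    (hf : (∃ T : ThrCirc d 1, T.size = s ∧ ∀ x : Fin d → Bool,
            T.eval (fun j => if x j then 1 else 0) 0 = (if f x then 1 else 0)) ∨
          (∃ N : Net d 1, N.size = s ∧ ∀ x : Fin d → Bool,
            N.eval relu (fun j => if x j then 1 else 0) 0 = (if f x then 1 else 0)))
    (I : Finset (Fin d)) :
    ∃ t ≤ s + 1,
      ∃ (α : ({i // i ∈ I} → Bool) → List Bool → ℝ)
        (β : ({i // i ∉ I} → Bool) → List Bool → ℝ)
        (out : List Bool → Bool),
        ∀ (aIn : {i // i ∈ I} → Bool) (bIn : {i // i ∉ I} → Bool),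
          out (realTrans α β aIn bIn t) = f (mergeInput I aIn bIn) := by
  refine ⟨s, Nat.le_succ s, ?_⟩
  rcases hf with ⟨T, rfl, hT⟩ | ⟨N, rfl, hN⟩
  · rw [← T.size_toNet]
    refine T.toNet.exists_realTrans_eq heaviside_eq_ite 0 f (fun x => ?_) I
    have h := T.eval_pos_iff (fun j => if x j then 1 else 0) 0
    simp only [Int.cast_ite, Int.cast_one, Int.cast_zero, hT x] at h
    simp only [← h]
    by_cases hfx : f x <;> simp [hfx]
  · refine N.exists_realTrans_eq relu_eq_ite (1 / 2) f (fun x => ?_) I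
    cases h : f x <;> norm_num [hN x, h]

/-- if `f : {0,1}^d → {0,1}` is computed exactly by a threshold circuit
of size `s`, or by a ReLU network of size `s`, then for every bipartition of the `d`
input bits between Alice and Bob there is a real communication protocol of cost at most
`s + 1` computing `f` (the value of `f` is determined by the final transcript). -/
theorem circuit_to_real_communication (d s : ℕ) (f : (Fin d → Bool) → Bool)
    (hf : (∃ T : ThrCirc d 1, T.size = s ∧ ∀ x : Fin d → Bool,
            T.eval (fun j => if x j then 1 else 0) 0 = (if f x then 1 else 0)) ∨
          (∃ N : Net d 1, N.size = s ∧ ∀ x : Fin d → Bool,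
            N.eval relu (fun j => if x j then 1 else 0) 0 = (if f x then 1 else 0)))
    (I : Finset (Fin d)) (hI : I.Nonempty) (hIc : ∃ i, i ∉ I) :
    ∃ t ≤ s + 1,
      ∃ (α : ({i // i ∈ I} → Bool) → List Bool → ℝ)
        (β : ({i // i ∉ I} → Bool) → List Bool → ℝ)
        (out : List Bool → Bool),
        ∀ (aIn : {i // i ∈ I} → Bool) (bIn : {i // i ∉ I} → Bool),
          out (realTrans α β aIn bIn t) = f (mergeInput I aIn bIn) :=
  circuit_to_real_communication_general d s f hf I

end
end

section
/- Let g : {0,1}^d → {0,1} be computed exactly by a ReLU network of size m̃, and let f be the associated 4-Lipschitz extension. Then there exists a ReLU network Ñ of size m̃ + 2d such that Ñ(x) = f(x) for every x ∈ ([0,1/4] ∪ [3/4,1])^d; in particular ‖Ñ − f‖_{L2(μ)} = 0. -/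
/-!
On `([0,1/4] ∪ [3/4,1])^d` the point `x` lies in the cube `A_z` of the vertex `z` obtained by
rounding each coordinate, and the cubes of two distinct vertices are at distance at least `1/2`,
so `f(x) = g(z)`. The rounding `t ↦ relu(8t - 5) - relu(8t - 6)` is exact on `[0,1/4] ∪ [3/4,1]`,
costs two neurons per coordinate, and the signed combination of those `2d` neurons is folded
into the first affine layer of the network computing `g`.
-/

noncomputable section

/-- Boolean bit as a real number. -/
def bR (b : Bool) : ℝ := if b then 1 else 0

/-- `A_z = {x ∈ [0,1]^d : |x_i − z_i| ≤ 1/4 for all i}`. -/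
def Az {d : ℕ} (z : Fin d → Bool) : Set (EuclideanSpace ℝ (Fin d)) :=
  {x | ∀ i, x i ∈ Set.Icc (0:ℝ) 1 ∧ |x i - bR (z i)| ≤ 1/4}

/-- Given `g : {0,1}^d → {0,1}`, the associated real function
`f(x) = Σ_{z∈{0,1}^d} g(z)·max(0, 1 − 4·dist(x, A_z))` (Euclidean distance to `A_z`). -/
def fg {d : ℕ} (g : (Fin d → Bool) → Bool) (x : EuclideanSpace ℝ (Fin d)) : ℝ :=
  ∑ z : Fin d → Bool, bR (g z) * max 0 (1 - 4 * Metric.infDist x (Az z))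

/-- A vector of `ℝ^d` viewed as a point of Euclidean space. -/
def toEuc {d : ℕ} (x : Fin d → ℝ) : EuclideanSpace ℝ (Fin d) := WithLp.toLp 2 x

namespace Net

def precomp {n n' q : ℕ} (M : Fin n → Fin n' → ℝ) : Net n q → Net n' q
  | .last A b => .last (fun i j => ∑ k, A i k * M k j) b
  | .layer A b rest => .layer (fun i j => ∑ k, A i k * M k j) b rest

@[simp]
lemma size_precomp {n n' q : ℕ} (M : Fin n → Fin n' → ℝ) (N : Net n q) :
    (N.precomp M).size = N.size := by
  cases N <;> rfl

lemma sum_matrix_mul_apply {n n' : ℕ} (a : Fin n → ℝ) (M : Fin n → Fin n' → ℝ)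
    (x : Fin n' → ℝ) :
    ∑ j, (∑ k, a k * M k j) * x j = ∑ k, a k * ∑ j, M k j * x j := by
  simp only [Finset.sum_mul, Finset.mul_sum, mul_assoc]
  exact Finset.sum_comm

lemma eval_precomp {n n' q : ℕ} (σ : ℝ → ℝ) (M : Fin n → Fin n' → ℝ) (N : Net n q)
    (x : Fin n' → ℝ) :
    (N.precomp M).eval σ x = N.eval σ (fun k => ∑ j, M k j * x j) := by
  funext i
  cases N <;> simp only [precomp, eval, sum_matrix_mul_apply]

/-- Neuron `i` of the first (second) half of the new layer computes `σ (w * x i + b₁)`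
(`σ (w * x i + b₂)`). -/
def precompCoordDiff {d q : ℕ} (w b₁ b₂ : ℝ) (N : Net d q) : Net d q :=
  .layer (Fin.append (fun i j => if j = i then w else 0) (fun i j => if j = i then w else 0))
    (Fin.append (fun _ => b₁) (fun _ => b₂))
    (N.precomp fun k => Fin.append (fun i => if i = k then 1 else 0)
      (fun i => if i = k then -1 else 0))

lemma size_precompCoordDiff {d q : ℕ} (w b₁ b₂ : ℝ) (N : Net d q) :
    (N.precompCoordDiff w b₁ b₂).size = N.size + 2 * d := by
  simp only [precompCoordDiff, size, size_precomp]
  omega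

lemma eval_precompCoordDiff {d q : ℕ} (σ : ℝ → ℝ) (w b₁ b₂ : ℝ) (N : Net d q)
    (x : Fin d → ℝ) :
    (N.precompCoordDiff w b₁ b₂).eval σ x =
      N.eval σ (fun i => σ (w * x i + b₁) - σ (w * x i + b₂)) := by
  simp only [precompCoordDiff, eval, eval_precomp]
  congr! 2 with k
  simp only [Fin.sum_univ_add, Fin.append_left, Fin.append_right]
  simp [ite_mul, sub_eq_add_neg]

end Net

@[simp] lemma bR_true : bR true = 1 := rfl

@[simp] lemma bR_false : bR false = 0 := rfl

lemma relu_round_eq_bR {t : ℝ} (ht : t ∈ Set.Icc (0:ℝ) (1/4) ∪ Set.Icc (3/4) 1) :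
    relu (8 * t + -5) - relu (8 * t + -6) = bR (decide ((3:ℝ)/4 ≤ t)) := by
  rcases ht with ⟨_, ht⟩ | ⟨ht, _⟩
  · have : ¬ (3:ℝ)/4 ≤ t := by linarith
    simp only [relu, this, decide_false, bR_false]
    rw [max_eq_left (by linarith), max_eq_left (by linarith)]
    norm_num
  · simp only [relu, ht, decide_true, bR_true]
    rw [max_eq_right (by linarith), max_eq_right (by linarith)]
    norm_num

lemma abs_bR_sub_bR_of_ne {a b : Bool} (h : a ≠ b) : |bR a - bR b| = 1 := by
  cases a <;> cases b <;> simp_all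

lemma Az_nonempty {d : ℕ} (z : Fin d → Bool) : (Az z).Nonempty :=
  ⟨toEuc fun i => bR (z i), fun i => by cases h : z i <;> norm_num [toEuc, h]⟩

/-- Cubes of distinct vertices are `1/2` apart already in a coordinate where the vertices differ. -/
lemma half_le_infDist_Az {d : ℕ} {z z' : Fin d → Bool} {p : EuclideanSpace ℝ (Fin d)}
    (hp : p ∈ Az z) (hz : z' ≠ z) : 1 / 2 ≤ Metric.infDist p (Az z') := by
  obtain ⟨i, hi⟩ := Function.ne_iff.mp hz
  refine (Metric.le_infDist (Az_nonempty z')).mpr fun y hy => ?_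
  have hpi := (hp i).2
  have hyi := (hy i).2
  have hcoord : dist (p i) (y i) ≤ dist p y := PiLp.dist_apply_le p y i
  rw [Real.dist_eq] at hcoord
  have hsep : 1 ≤ |p i - bR (z i)| + |p i - y i| + |y i - bR (z' i)| := by
    calc (1 : ℝ) = |bR (z i) - bR (z' i)| := (abs_bR_sub_bR_of_ne hi.symm).symm
      _ = |-(p i - bR (z i)) + (p i - y i) + (y i - bR (z' i))| := by congr 1; ring
      _ ≤ _ := by
        simpa only [abs_neg] using abs_add_three (-(p i - bR (z i))) (p i - y i) (y i - bR (z' i))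
  linarith

lemma fg_eq_of_mem_Az {d : ℕ} (g : (Fin d → Bool) → Bool) {z : Fin d → Bool}
    {p : EuclideanSpace ℝ (Fin d)} (hp : p ∈ Az z) : fg g p = bR (g z) := by
  rw [fg, Finset.sum_eq_single z]
  · simp [Metric.infDist_zero_of_mem hp]
  · intro z' _ hz'
    have := half_le_infDist_Az hp hz'
    rw [max_eq_left (by linarith), mul_zero]
  · simp

lemma toEuc_mem_Az_round {d : ℕ} {x : Fin d → ℝ}
    (hx : ∀ i, x i ∈ Set.Icc (0:ℝ) (1/4) ∪ Set.Icc (3/4) 1) :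
    toEuc x ∈ Az (fun i => decide ((3:ℝ)/4 ≤ x i)) := by
  intro i
  simp only [toEuc, PiLp.toLp_apply, Set.mem_Icc]
  rcases hx i with ⟨h0, h1⟩ | ⟨h0, h1⟩
  · have : ¬ (3:ℝ)/4 ≤ x i := by linarith
    simp only [this, decide_false, bR_false]
    refine ⟨⟨h0, by linarith⟩, abs_le.mpr ⟨by linarith, by linarith⟩⟩
  · simp only [h0, decide_true, bR_true]
    refine ⟨⟨by linarith, h1⟩, abs_le.mpr ⟨by linarith, by linarith⟩⟩

/-- let `g : {0,1}^d → {0,1}` be computed exactly by a ReLU network of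
size `m̃`, and let `f` be the associated `4`-Lipschitz extension. Then there is a ReLU
network `Ñ` of size `m̃ + 2d` such that `Ñ(x) = f(x)` for every
`x ∈ ([0,1/4] ∪ [3/4,1])^d`; in particular `‖Ñ − f‖_{L2(μ)} = 0` for the uniform
distribution `μ` on that set. -/
theorem exact_net_for_lipschitz_extension (d : ℕ) (g : (Fin d → Bool) → Bool)
    (N : Net d 1)
    (hN : ∀ z : Fin d → Bool, N.eval relu (fun i => bR (z i)) 0 = bR (g z)) :
    ∃ Ntil : Net d 1, Ntil.size = N.size + 2 * d ∧
      ∀ x : Fin d → ℝ,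
        (∀ i, x i ∈ Set.Icc (0:ℝ) (1/4) ∪ Set.Icc (3/4) 1) →
        Ntil.eval relu x 0 = fg g (toEuc x) := by
  refine ⟨N.precompCoordDiff 8 (-5) (-6), N.size_precompCoordDiff 8 (-5) (-6), fun x hx => ?_⟩
  rw [Net.eval_precompCoordDiff, fg_eq_of_mem_Az g (toEuc_mem_Az_round hx), ← hN]
  simp only [relu_round_eq_bR (hx _)]

end
end
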